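/- Let x₁ ∈ ℂ^{n₁}, x₂ ∈ ℂ^{n₂} and λ, μ ∈ ℂ satisfy A₁ x₁ = λ B₁ x₁ + μ C₁ x₁ and A₂ x₂ = λ B₂ x₂ + μ C₂ x₂. Then, with z = x₁ ⊗ x₂, one has Δ₁ z = λ Δ₀ z and Δ₂ z = μ Δ₀ z. -/
import Mathlib


open Matrix Kronecker

/-- Kronecker product of vectors. -/
def vecKron {m n : Type*} (x : m → ℂ) (y : n → ℂ) : m × n → ℂ :=
  fun p => x p.1 * y p.2

lemma kron_mulVec {m n : Type*} [Fintype m] [Fintype n]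
    (M : Matrix m m ℂ) (N : Matrix n n ℂ) (x : m → ℂ) (y : n → ℂ) :
    (M ⊗ₖ N) *ᵥ vecKron x y = vecKron (M *ᵥ x) (N *ᵥ y) := by
  funext p
  simp only [mulVec, dotProduct, vecKron, kroneckerMap_apply, Fintype.sum_prod_type,
    Finset.mul_sum, Finset.sum_mul]
  rw [Finset.sum_comm]
  congr 1; funext i; congr 1; funext j; ring

/-- If (λ, μ) with decomposable vector x₁ ⊗ x₂ is an eigenpair of the 2-parameter
eigenvalue problem, then z = x₁ ⊗ x₂ satisfies Δ₁ z = λ Δ₀ z and Δ₂ z = μ Δ₀ z. -/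
theorem twopar_delta_eigen {n₁ n₂ : ℕ}
    (A₁ B₁ C₁ : Matrix (Fin n₁) (Fin n₁) ℂ)
    (A₂ B₂ C₂ : Matrix (Fin n₂) (Fin n₂) ℂ)
    (x₁ : Fin n₁ → ℂ) (x₂ : Fin n₂ → ℂ)
    (lam mu : ℂ)
    (h₁ : A₁ *ᵥ x₁ = lam • (B₁ *ᵥ x₁) + mu • (C₁ *ᵥ x₁))
    (h₂ : A₂ *ᵥ x₂ = lam • (B₂ *ᵥ x₂) + mu • (C₂ *ᵥ x₂)) :
    letI Δ₀ := B₁ ⊗ₖ C₂ - C₁ ⊗ₖ B₂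
    letI Δ₁ := A₁ ⊗ₖ C₂ - C₁ ⊗ₖ A₂
    letI Δ₂ := B₁ ⊗ₖ A₂ - A₁ ⊗ₖ B₂
    letI z := vecKron x₁ x₂
    Δ₁ *ᵥ z = lam • (Δ₀ *ᵥ z) ∧ Δ₂ *ᵥ z = mu • (Δ₀ *ᵥ z) := by
  constructor <;>
  · funext p
    simp only [sub_mulVec, kron_mulVec, h₁, h₂, vecKron, Pi.sub_apply, Pi.add_apply,
      Pi.smul_apply, smul_eq_mul]
    ring
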